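/- Convergence of federated EM for identity-covariance Gaussian mixtures (Theorem 1): Start from any μ^(0)_1,…,μ^(0)_M ∈ ℝ^d and, for each client c, any strictly positive probability vector π^(0)_c on {1,…,M}. For t ≥ 1 define the iterates: (E-step) q^(t)_{c,i}(m) = π^(t−1)_c(m)·N(x_{c,i}; μ^(t−1)_m, I) / Σ_{m'=1}^M π^(t−1)_c(m')·N(x_{c,i}; μ^(t−1)_{m'}, I) for every c, i, m; (M-step) π^(t)_c(m) = (1/N_c)·Σ_{i=1}^{N_c} q^(t)_{c,i}(m) and μ^(t)_m = (Σ_{c=1}^C Σ_{i=1}^{N_c} q^(t)_{c,i}(m)·x_{c,i}) / (Σ_{c=1}^C Σ_{i=1}^{N_c} q^(t)_{c,i}(m)) (all denominators are strictly positive). Then, writing F^(t) = F(μ^(t)_{1:M}, π^(t)_{1:C}), the sequence F^(t) is nondecreasing in t, and for every T ≥ 1, (1/T)·Σ_{t=1}^T |F^(t) − F^(t−1)| ≤ (F* − F^(0))/T, where F* = −(d/2)·log(2π)·Σ_{c=1}^C N_c; in particular the time-averaged successive differences of the log-likelihood are O(T^{−1}). -/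

import Mathlib

/-- Identity-covariance Gaussian density on `ℝ^d`:
`N(x; μ, I) = (2π)^(-d/2) · exp(-‖x-μ‖²/2)`. -/
noncomputable def gaussI (d : ℕ) (x μ : EuclideanSpace ℝ (Fin d)) : ℝ :=
  (2 * Real.pi) ^ (-(d : ℝ) / 2) * Real.exp (-‖x - μ‖ ^ 2 / 2)

/-- Log-likelihood of the identity-covariance Gaussian mixture across all clients:
`F(μ_{1:M}, π_{1:C}) = Σ_c Σ_i log(Σ_m π_c(m) N(x_{c,i}; μ_m, I))`. -/
noncomputable def logLik (d C M : ℕ) (N : Fin C → ℕ)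
    (x : (c : Fin C) → Fin (N c) → EuclideanSpace ℝ (Fin d))
    (μ : Fin M → EuclideanSpace ℝ (Fin d))
    (π : Fin C → Fin M → ℝ) : ℝ :=
  ∑ c, ∑ i, Real.log (∑ m, π c m * gaussI d (x c i) (μ m))

/-- The EM surrogate function
`G(μ_{1:M}, π_{1:C}; q) = Σ_c Σ_i Σ_m q_{c,i}(m)·[log π_c(m) − (d/2)·log(2π)
  − ‖x_{c,i} − μ_m‖²/2 − log q_{c,i}(m)]`. -/
noncomputable def surrogate (d C M : ℕ) (N : Fin C → ℕ)
    (x : (c : Fin C) → Fin (N c) → EuclideanSpace ℝ (Fin d))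
    (μ : Fin M → EuclideanSpace ℝ (Fin d))
    (π : Fin C → Fin M → ℝ)
    (q : (c : Fin C) → Fin (N c) → Fin M → ℝ) : ℝ :=
  ∑ c, ∑ i, ∑ m, q c i m *
    (Real.log (π c m) - (d : ℝ) / 2 * Real.log (2 * Real.pi)
      - ‖x c i - μ m‖ ^ 2 / 2 - Real.log (q c i m))


/-!
EM is a minorize–maximize scheme. For responsibilities `q` (probability vectors over the
components), Gibbs' inequality makes the surrogate `G(μ, π; q)` a lower bound for the
log-likelihood `F(μ, π)`, with equality when `q` is the E-step posterior of `(μ, π)`. The M-step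
maximizes `G(·, ·; q)` exactly: the weights by Gibbs' inequality again, the means because a
weighted centroid minimizes the weighted sum of squared distances. Hence
`F⁽ᵗ⁾ = G(θ⁽ᵗ⁾; q⁽ᵗ⁺¹⁾) ≤ G(θ⁽ᵗ⁺¹⁾; q⁽ᵗ⁺¹⁾) ≤ F⁽ᵗ⁺¹⁾`. The increments are therefore nonnegative
and telescope to `F⁽ᵀ⁾ − F⁽⁰⁾`, and `F ≤ F*` because every Gaussian density is at most
`(2π)^(-d/2)`.
-/

open Finset

lemma gaussI_pos (d : ℕ) (x μ : EuclideanSpace ℝ (Fin d)) : 0 < gaussI d x μ := by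
  unfold gaussI
  positivity

lemma gaussI_le (d : ℕ) (x μ : EuclideanSpace ℝ (Fin d)) :
    gaussI d x μ ≤ (2 * Real.pi) ^ (-(d : ℝ) / 2) :=
  mul_le_of_le_one_right (by positivity) (Real.exp_le_one_iff.2 (by linarith [sq_nonneg ‖x - μ‖]))

lemma log_mul_gaussI (d : ℕ) (x μ : EuclideanSpace ℝ (Fin d)) {p : ℝ} (hp : 0 < p) :
    Real.log (p * gaussI d x μ)
      = Real.log p - (d : ℝ) / 2 * Real.log (2 * Real.pi) - ‖x - μ‖ ^ 2 / 2 := by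
  rw [Real.log_mul hp.ne' (gaussI_pos d x μ).ne', gaussI,
    Real.log_mul (by positivity) (Real.exp_ne_zero _), Real.log_rpow (by positivity), Real.log_exp]
  ring

lemma mul_log_sub_log_le_sub {a q : ℝ} (ha : 0 < a) (hq : 0 ≤ q) :
    q * (Real.log a - Real.log q) ≤ a - q := by
  rcases hq.eq_or_lt with rfl | hq
  · simpa using ha.le
  calc q * (Real.log a - Real.log q) = q * Real.log (a / q) := by
        rw [Real.log_div ha.ne' hq.ne']
    _ ≤ q * (a / q - 1) :=
        mul_le_mul_of_nonneg_left (Real.log_le_sub_one_of_pos (div_pos ha hq)) hq.le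
    _ = a - q := by field_simp

theorem sum_mul_log_sub_log_le_log_sum {ι : Type*} [Fintype ι] {q a : ι → ℝ}
    (hq0 : ∀ i, 0 ≤ q i) (hq1 : ∑ i, q i = 1) (ha : ∀ i, 0 < a i) :
    ∑ i, q i * (Real.log (a i) - Real.log (q i)) ≤ Real.log (∑ i, a i) := by
  have hι : (univ : Finset ι).Nonempty :=
    nonempty_of_sum_ne_zero (by rw [hq1]; exact one_ne_zero)
  set S := ∑ i, a i
  have hS : 0 < S := sum_pos (fun i _ => ha i) hι
  have key := sum_le_sum fun i (_ : i ∈ univ) => mul_log_sub_log_le_sub (div_pos (ha i) hS) (hq0 i)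
  have hshift : ∀ i, q i * (Real.log (a i / S) - Real.log (q i))
      = q i * (Real.log (a i) - Real.log (q i)) - q i * Real.log S := by
    intro i
    rw [Real.log_div (ha i).ne' hS.ne']
    ring
  rw [sum_sub_distrib, ← sum_div, hq1, div_self hS.ne', sub_self] at key
  simp only [hshift, sum_sub_distrib, ← sum_mul, hq1, one_mul] at key
  linarith

theorem sum_mul_log_le_sum_mul_log_div_sum {ι : Type*} [Fintype ι] {w p : ι → ℝ}
    (hw : ∀ i, 0 ≤ w i) (hW : 0 < ∑ i, w i) (hp0 : ∀ i, 0 < p i) (hp1 : ∑ i, p i = 1) :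
    ∑ i, w i * Real.log (p i) ≤ ∑ i, w i * Real.log (w i / ∑ j, w j) := by
  set W := ∑ j, w j
  have hgibbs := sum_mul_log_sub_log_le_log_sum (q := fun i => w i / W)
    (fun i => div_nonneg (hw i) hW.le) (by rw [← sum_div, div_self hW.ne']) hp0
  rw [hp1, Real.log_one] at hgibbs
  have hscale : ∑ i, w i * (Real.log (p i) - Real.log (w i / W))
      = W * ∑ i, w i / W * (Real.log (p i) - Real.log (w i / W)) := by
    rw [mul_sum]
    refine sum_congr rfl fun i _ => ?_
    field_simp
  have := mul_nonpos_of_nonneg_of_nonpos hW.le hgibbs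
  rw [← hscale] at this
  simp only [mul_sub, sum_sub_distrib] at this
  linarith

theorem Finset.sum_mul_norm_sub_sq_eq_add_centerMass {ι E : Type*} [NormedAddCommGroup E]
    [InnerProductSpace ℝ E] (s : Finset ι) {w : ι → ℝ} (y : ι → E) (hW : ∑ j ∈ s, w j ≠ 0)
    (z : E) :
    ∑ j ∈ s, w j * ‖y j - z‖ ^ 2
      = ∑ j ∈ s, w j * ‖y j - s.centerMass w y‖ ^ 2
        + (∑ j ∈ s, w j) * ‖s.centerMass w y - z‖ ^ 2 := by
  set b := s.centerMass w y
  have hbalance : ∑ j ∈ s, w j • (y j - b) = 0 := by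
    simp only [smul_sub, sum_sub_distrib, ← sum_smul, b, Finset.centerMass, smul_smul, ← sum_mul,
      mul_inv_cancel₀ hW, one_smul, sub_self]
  have hexpand : ∀ j, w j * ‖y j - z‖ ^ 2
      = w j * ‖y j - b‖ ^ 2 + 2 * inner ℝ (w j • (y j - b)) (b - z) + w j * ‖b - z‖ ^ 2 := by
    intro j
    rw [show y j - z = (y j - b) + (b - z) by abel, norm_add_sq_real, real_inner_smul_left]
    ring
  simp only [hexpand, sum_add_distrib, ← mul_sum, ← sum_inner, hbalance, inner_zero_left,
    ← sum_mul]
  ring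

theorem Finset.sum_mul_norm_sub_centerMass_sq_le {ι E : Type*} [NormedAddCommGroup E]
    [InnerProductSpace ℝ E] (s : Finset ι) {w : ι → ℝ} (y : ι → E) (hw : ∀ j ∈ s, 0 ≤ w j)
    (z : E) :
    ∑ j ∈ s, w j * ‖y j - s.centerMass w y‖ ^ 2 ≤ ∑ j ∈ s, w j * ‖y j - z‖ ^ 2 := by
  rcases (sum_nonneg hw).eq_or_lt with hW | hW
  · have hzero := (sum_eq_zero_iff_of_nonneg hw).1 hW.symm
    have hvanish : ∀ v : E, ∑ j ∈ s, w j * ‖y j - v‖ ^ 2 = 0 := fun v =>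
      sum_eq_zero fun j hj => by rw [hzero j hj, zero_mul]
    rw [hvanish, hvanish]
  rw [s.sum_mul_norm_sub_sq_eq_add_centerMass y hW.ne' z]
  exact le_add_of_nonneg_right (by positivity)

theorem Monotone.sum_Icc_abs_sub_pred_eq {f : ℕ → ℝ} (hf : Monotone f) (T : ℕ) :
    ∑ t ∈ Icc 1 T, |f t - f (t - 1)| = f T - f 0 := by
  induction T with
  | zero => simp
  | succ T ih =>
    rw [sum_Icc_succ_top (by omega), ih, Nat.add_sub_cancel,
      abs_of_nonneg (sub_nonneg.2 (hf T.le_succ))]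
    ring

section EM

variable {d C M : ℕ} {N : Fin C → ℕ} {x : (c : Fin C) → Fin (N c) → EuclideanSpace ℝ (Fin d)}

noncomputable def emPosterior (x : (c : Fin C) → Fin (N c) → EuclideanSpace ℝ (Fin d))
    (μ : Fin M → EuclideanSpace ℝ (Fin d)) (π : Fin C → Fin M → ℝ) (c : Fin C) (i : Fin (N c))
    (m : Fin M) : ℝ :=
  π c m * gaussI d (x c i) (μ m) / ∑ m', π c m' * gaussI d (x c i) (μ m')

noncomputable def mStepWeights (N : Fin C → ℕ) (q : (c : Fin C) → Fin (N c) → Fin M → ℝ)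
    (c : Fin C) (m : Fin M) : ℝ :=
  (N c : ℝ)⁻¹ * ∑ i, q c i m

noncomputable def mStepMeans (x : (c : Fin C) → Fin (N c) → EuclideanSpace ℝ (Fin d))
    (q : (c : Fin C) → Fin (N c) → Fin M → ℝ) (m : Fin M) : EuclideanSpace ℝ (Fin d) :=
  (∑ c, ∑ i, q c i m)⁻¹ • ∑ c, ∑ i, q c i m • x c i

lemma emPosterior_pos [Nonempty (Fin M)] {μ : Fin M → EuclideanSpace ℝ (Fin d)}
    {π : Fin C → Fin M → ℝ} (hπ : ∀ c m, 0 < π c m) (c : Fin C) (i : Fin (N c)) (m : Fin M) :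
    0 < emPosterior x μ π c i m :=
  div_pos (mul_pos (hπ c m) (gaussI_pos ..))
    (sum_pos (fun m' _ => mul_pos (hπ c m') (gaussI_pos ..)) univ_nonempty)

lemma sum_emPosterior [Nonempty (Fin M)] {μ : Fin M → EuclideanSpace ℝ (Fin d)}
    {π : Fin C → Fin M → ℝ} (hπ : ∀ c m, 0 < π c m) (c : Fin C) (i : Fin (N c)) :
    ∑ m, emPosterior x μ π c i m = 1 := by
  simp only [emPosterior, ← sum_div]
  exact div_self (sum_pos (fun m _ => mul_pos (hπ c m) (gaussI_pos ..)) univ_nonempty).ne'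

lemma mStepWeights_pos (hN : ∀ c, 0 < N c) {q : (c : Fin C) → Fin (N c) → Fin M → ℝ}
    (hq : ∀ c i m, 0 < q c i m) (c : Fin C) (m : Fin M) : 0 < mStepWeights N q c m := by
  have : Nonempty (Fin (N c)) := Fin.pos_iff_nonempty.1 (hN c)
  exact mul_pos (inv_pos.2 (Nat.cast_pos.2 (hN c))) (sum_pos (fun i _ => hq c i m) univ_nonempty)

lemma sum_mStepWeights (hN : ∀ c, 0 < N c) {q : (c : Fin C) → Fin (N c) → Fin M → ℝ}
    (hq : ∀ c i, ∑ m, q c i m = 1) (c : Fin C) : ∑ m, mStepWeights N q c m = 1 := by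
  simp only [mStepWeights, ← mul_sum]
  rw [sum_comm]
  simp [hq, (Nat.cast_pos.2 (hN c)).ne']

lemma surrogate_eq_sum_log_mul_gaussI {μ : Fin M → EuclideanSpace ℝ (Fin d)}
    {π : Fin C → Fin M → ℝ} (q : (c : Fin C) → Fin (N c) → Fin M → ℝ) (hπ : ∀ c m, 0 < π c m) :
    surrogate d C M N x μ π q = ∑ c, ∑ i, ∑ m, q c i m *
      (Real.log (π c m * gaussI d (x c i) (μ m)) - Real.log (q c i m)) := by
  simp only [surrogate, log_mul_gaussI _ _ _ (hπ _ _)]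

/-- Gibbs' inequality for each data point. -/
theorem surrogate_le_logLik {μ : Fin M → EuclideanSpace ℝ (Fin d)} {π : Fin C → Fin M → ℝ}
    {q : (c : Fin C) → Fin (N c) → Fin M → ℝ} (hq0 : ∀ c i m, 0 ≤ q c i m)
    (hq1 : ∀ c i, ∑ m, q c i m = 1) (hπ : ∀ c m, 0 < π c m) :
    surrogate d C M N x μ π q ≤ logLik d C M N x μ π := by
  rw [surrogate_eq_sum_log_mul_gaussI q hπ]
  exact sum_le_sum fun c _ => sum_le_sum fun i _ =>
    sum_mul_log_sub_log_le_log_sum (hq0 c i) (hq1 c i) fun m => mul_pos (hπ c m) (gaussI_pos ..)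

theorem surrogate_emPosterior [Nonempty (Fin M)] {μ : Fin M → EuclideanSpace ℝ (Fin d)}
    {π : Fin C → Fin M → ℝ} (hπ : ∀ c m, 0 < π c m) :
    surrogate d C M N x μ π (emPosterior x μ π) = logLik d C M N x μ π := by
  rw [surrogate_eq_sum_log_mul_gaussI _ hπ]
  refine sum_congr rfl fun c _ => sum_congr rfl fun i _ => ?_
  have hS : 0 < ∑ m', π c m' * gaussI d (x c i) (μ m') :=
    sum_pos (fun m _ => mul_pos (hπ c m) (gaussI_pos ..)) univ_nonempty
  have hlog : ∀ m, Real.log (π c m * gaussI d (x c i) (μ m)) - Real.log (emPosterior x μ π c i m)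
      = Real.log (∑ m', π c m' * gaussI d (x c i) (μ m')) := by
    intro m
    rw [emPosterior, Real.log_div (mul_pos (hπ c m) (gaussI_pos ..)).ne' hS.ne']
    ring
  simp only [hlog, ← sum_mul, sum_emPosterior hπ, one_mul]

theorem surrogate_le_surrogate_mStepWeights (hN : ∀ c, 0 < N c)
    {μ : Fin M → EuclideanSpace ℝ (Fin d)} {π : Fin C → Fin M → ℝ}
    {q : (c : Fin C) → Fin (N c) → Fin M → ℝ} (hq0 : ∀ c i m, 0 ≤ q c i m)
    (hq1 : ∀ c i, ∑ m, q c i m = 1) (hπ0 : ∀ c m, 0 < π c m) (hπ1 : ∀ c, ∑ m, π c m = 1) :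
    surrogate d C M N x μ π q ≤ surrogate d C M N x μ (mStepWeights N q) q := by
  have key : ∀ c, ∑ i, ∑ m, q c i m * Real.log (π c m)
      ≤ ∑ i, ∑ m, q c i m * Real.log (mStepWeights N q c m) := by
    intro c
    have hW : ∑ m, ∑ i, q c i m = N c := by
      rw [sum_comm]
      simp [hq1]
    rw [sum_comm, sum_comm (f := fun i m => q c i m * Real.log (mStepWeights N q c m))]
    simp only [← sum_mul]
    convert sum_mul_log_le_sum_mul_log_div_sum (fun m => sum_nonneg fun i _ => hq0 c i m)
      (hW ▸ Nat.cast_pos.2 (hN c)) (hπ0 c) (hπ1 c) using 4 with m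
    rw [hW, mStepWeights, inv_mul_eq_div]
  simp only [surrogate, mul_sub, sum_sub_distrib]
  linarith [sum_le_sum fun c (_ : c ∈ univ) => key c]

theorem surrogate_le_surrogate_mStepMeans {μ : Fin M → EuclideanSpace ℝ (Fin d)}
    {π : Fin C → Fin M → ℝ} {q : (c : Fin C) → Fin (N c) → Fin M → ℝ}
    (hq0 : ∀ c i m, 0 ≤ q c i m) :
    surrogate d C M N x μ π q ≤ surrogate d C M N x (mStepMeans x q) π q := by
  have key : ∀ m, ∑ c, ∑ i, q c i m * ‖x c i - mStepMeans x q m‖ ^ 2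
      ≤ ∑ c, ∑ i, q c i m * ‖x c i - μ m‖ ^ 2 := by
    intro m
    have := univ.sum_mul_norm_sub_centerMass_sq_le (w := fun j : (c : Fin C) × Fin (N c) =>
      q j.1 j.2 m) (fun j => x j.1 j.2) (fun j _ => hq0 j.1 j.2 m) (μ m)
    simpa only [Finset.centerMass, Fintype.sum_sigma, mStepMeans] using this
  have hswap : ∀ μ' : Fin M → EuclideanSpace ℝ (Fin d),
      ∑ c, ∑ i, ∑ m, q c i m * (‖x c i - μ' m‖ ^ 2 / 2)
        = (∑ m, ∑ c, ∑ i, q c i m * ‖x c i - μ' m‖ ^ 2) / 2 := by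
    intro μ'
    simp only [sum_div, mul_div_assoc]
    conv_rhs => rw [sum_comm]
    exact sum_congr rfl fun c _ => sum_comm
  simp only [surrogate, mul_sub, sum_sub_distrib]
  linarith [hswap μ, hswap (mStepMeans x q), sum_le_sum fun m (_ : m ∈ univ) => key m]

theorem logLik_le_logLik_emStep [Nonempty (Fin M)] (hN : ∀ c, 0 < N c)
    {μ : Fin M → EuclideanSpace ℝ (Fin d)} {π : Fin C → Fin M → ℝ}
    (hπ0 : ∀ c m, 0 < π c m) (hπ1 : ∀ c, ∑ m, π c m = 1) :
    logLik d C M N x μ π ≤ logLik d C M N x (mStepMeans x (emPosterior x μ π))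
      (mStepWeights N (emPosterior x μ π)) := by
  set q := emPosterior x μ π
  have hq0 : ∀ c i m, 0 ≤ q c i m := fun c i m => (emPosterior_pos hπ0 c i m).le
  have hq1 : ∀ c i, ∑ m, q c i m = 1 := sum_emPosterior hπ0
  calc logLik d C M N x μ π = surrogate d C M N x μ π q := (surrogate_emPosterior hπ0).symm
    _ ≤ surrogate d C M N x μ (mStepWeights N q) q :=
        surrogate_le_surrogate_mStepWeights hN hq0 hq1 hπ0 hπ1
    _ ≤ surrogate d C M N x (mStepMeans x q) (mStepWeights N q) q :=
        surrogate_le_surrogate_mStepMeans hq0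
    _ ≤ logLik d C M N x (mStepMeans x q) (mStepWeights N q) :=
        surrogate_le_logLik hq0 hq1 (mStepWeights_pos hN (emPosterior_pos hπ0))

theorem logLik_le (μ : Fin M → EuclideanSpace ℝ (Fin d)) {π : Fin C → Fin M → ℝ}
    (hπ0 : ∀ c m, 0 ≤ π c m) (hπ1 : ∀ c, ∑ m, π c m = 1) :
    logLik d C M N x μ π ≤ -((d : ℝ) / 2) * Real.log (2 * Real.pi) * ∑ c, (N c : ℝ) := by
  have hpoint : ∀ c i, Real.log (∑ m, π c m * gaussI d (x c i) (μ m))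
      ≤ -((d : ℝ) / 2) * Real.log (2 * Real.pi) := by
    intro c i
    obtain ⟨m, -, hm⟩ : ∃ m ∈ univ, (0 : ℝ) < π c m := exists_lt_of_sum_lt (by simp [hπ1 c])
    have hpos : 0 < ∑ m, π c m * gaussI d (x c i) (μ m) :=
      sum_pos' (fun m _ => mul_nonneg (hπ0 c m) (gaussI_pos ..).le)
        ⟨m, mem_univ m, mul_pos hm (gaussI_pos ..)⟩
    have hle : ∑ m, π c m * gaussI d (x c i) (μ m) ≤ (2 * Real.pi) ^ (-(d : ℝ) / 2) := by
      calc ∑ m, π c m * gaussI d (x c i) (μ m)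
          ≤ ∑ m, π c m * (2 * Real.pi) ^ (-(d : ℝ) / 2) :=
            sum_le_sum fun m _ => mul_le_mul_of_nonneg_left (gaussI_le ..) (hπ0 c m)
        _ = (2 * Real.pi) ^ (-(d : ℝ) / 2) := by rw [← sum_mul, hπ1 c, one_mul]
    calc Real.log (∑ m, π c m * gaussI d (x c i) (μ m))
        ≤ Real.log ((2 * Real.pi) ^ (-(d : ℝ) / 2)) := Real.log_le_log hpos hle
      _ = -((d : ℝ) / 2) * Real.log (2 * Real.pi) := by
        rw [Real.log_rpow (by positivity)]
        ring
  calc logLik d C M N x μ π ≤ ∑ c, ∑ _i : Fin (N c), -((d : ℝ) / 2) * Real.log (2 * Real.pi) :=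
        sum_le_sum fun c _ => sum_le_sum fun i _ => hpoint c i
    _ = -((d : ℝ) / 2) * Real.log (2 * Real.pi) * ∑ c, (N c : ℝ) := by
        simp [mul_sum, mul_comm]

end EM

theorem federated_em_gmm_convergence_general
    (d C M : ℕ) (hM : 1 ≤ M)
    (N : Fin C → ℕ) (hN : ∀ c, 1 ≤ N c)
    (x : (c : Fin C) → Fin (N c) → EuclideanSpace ℝ (Fin d))
    (μ : ℕ → Fin M → EuclideanSpace ℝ (Fin d))
    (π : ℕ → Fin C → Fin M → ℝ)
    (q : ℕ → (c : Fin C) → Fin (N c) → Fin M → ℝ)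
    -- initialization: strictly positive probability vectors
    (hπ0pos : ∀ c m, 0 < π 0 c m) (hπ0sum : ∀ c, ∑ m, π 0 c m = 1)
    -- E-step at every t ≥ 1
    (hq : ∀ t, 1 ≤ t → ∀ c i m, q t c i m
      = π (t - 1) c m * gaussI d (x c i) (μ (t - 1) m)
          / ∑ m', π (t - 1) c m' * gaussI d (x c i) (μ (t - 1) m'))
    -- M-step at every t ≥ 1
    (hπ : ∀ t, 1 ≤ t → ∀ c m, π t c m = ((N c : ℝ))⁻¹ * ∑ i, q t c i m)
    (hμ : ∀ t, 1 ≤ t → ∀ m, μ t m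
      = (∑ c, ∑ i, q t c i m)⁻¹ • ∑ c, ∑ i, q t c i m • x c i) :
    Monotone (fun t => logLik d C M N x (μ t) (π t))
    ∧ ∀ T : ℕ, 1 ≤ T →
        (1 / (T : ℝ)) * ∑ t ∈ Finset.Icc 1 T,
            |logLik d C M N x (μ t) (π t) - logLik d C M N x (μ (t - 1)) (π (t - 1))|
          ≤ (-((d : ℝ) / 2) * Real.log (2 * Real.pi) * (∑ c, (N c : ℝ))
              - logLik d C M N x (μ 0) (π 0)) / (T : ℝ) := by
  have : Nonempty (Fin M) := Fin.pos_iff_nonempty.1 hM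
  have hqt : ∀ t, q (t + 1) = emPosterior x (μ t) (π t) := fun t =>
    funext fun c => funext fun i => funext fun m => by
      rw [emPosterior]
      simpa using hq (t + 1) (by omega) c i m
  have hπt : ∀ t, π (t + 1) = mStepWeights N (q (t + 1)) := fun t =>
    funext fun c => funext fun m => hπ (t + 1) (by omega) c m
  have hμt : ∀ t, μ (t + 1) = mStepMeans x (q (t + 1)) := fun t =>
    funext fun m => hμ (t + 1) (by omega) m
  have hprob : ∀ t, (∀ c m, 0 < π t c m) ∧ ∀ c, ∑ m, π t c m = 1 := by
    intro t
    induction t with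
    | zero => exact ⟨hπ0pos, hπ0sum⟩
    | succ t ih =>
      rw [hπt, hqt]
      exact ⟨mStepWeights_pos hN (emPosterior_pos ih.1),
        sum_mStepWeights hN (sum_emPosterior ih.1)⟩
  have hmono : Monotone fun t => logLik d C M N x (μ t) (π t) :=
    monotone_nat_of_le_succ fun t => by
      rw [hπt, hμt, hqt]
      exact logLik_le_logLik_emStep hN (hprob t).1 (hprob t).2
  refine ⟨hmono, fun T _ => ?_⟩
  rw [hmono.sum_Icc_abs_sub_pred_eq, one_div, inv_mul_eq_div]
  gcongr
  exact logLik_le _ (fun c m => ((hprob T).1 c m).le) (hprob T).2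

/-- Theorem 1: convergence of federated EM for identity-covariance Gaussian mixtures.
The log-likelihood iterates are nondecreasing, and the time-averaged successive
differences are bounded by `(F* − F⁽⁰⁾)/T = O(T⁻¹)`, where
`F* = −(d/2)·log(2π)·Σ_c N_c`. -/
theorem federated_em_gmm_convergence
    (d C M : ℕ) (hC : 1 ≤ C) (hM : 1 ≤ M)
    (N : Fin C → ℕ) (hN : ∀ c, 1 ≤ N c)
    (x : (c : Fin C) → Fin (N c) → EuclideanSpace ℝ (Fin d))
    (μ : ℕ → Fin M → EuclideanSpace ℝ (Fin d))
    (π : ℕ → Fin C → Fin M → ℝ)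
    (q : ℕ → (c : Fin C) → Fin (N c) → Fin M → ℝ)
    -- initialization: strictly positive probability vectors
    (hπ0pos : ∀ c m, 0 < π 0 c m) (hπ0sum : ∀ c, ∑ m, π 0 c m = 1)
    -- E-step at every t ≥ 1
    (hq : ∀ t, 1 ≤ t → ∀ c i m, q t c i m
      = π (t - 1) c m * gaussI d (x c i) (μ (t - 1) m)
          / ∑ m', π (t - 1) c m' * gaussI d (x c i) (μ (t - 1) m'))
    -- M-step at every t ≥ 1
    (hπ : ∀ t, 1 ≤ t → ∀ c m, π t c m = ((N c : ℝ))⁻¹ * ∑ i, q t c i m)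
    (hμ : ∀ t, 1 ≤ t → ∀ m, μ t m
      = (∑ c, ∑ i, q t c i m)⁻¹ • ∑ c, ∑ i, q t c i m • x c i)
    (hden : ∀ t, 1 ≤ t → ∀ m, 0 < ∑ c, ∑ i, q t c i m) :
    Monotone (fun t => logLik d C M N x (μ t) (π t))
    ∧ ∀ T : ℕ, 1 ≤ T →
        (1 / (T : ℝ)) * ∑ t ∈ Finset.Icc 1 T,
            |logLik d C M N x (μ t) (π t) - logLik d C M N x (μ (t - 1)) (π (t - 1))|
          ≤ (-((d : ℝ) / 2) * Real.log (2 * Real.pi) * (∑ c, (N c : ℝ))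
              - logLik d C M N x (μ 0) (π 0)) / (T : ℝ) :=
  federated_em_gmm_convergence_general d C M hM N hN x μ π q hπ0pos hπ0sum hq hπ hμ
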